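/- arXiv:2312.01715 — 8 statements merged into one kernel-verified Lean document; each statement's English description precedes it below -/
import Mathlib

section
/- Let $b_1 \geq b_2 \geq \cdots \geq b_m > 0$ be real numbers and $k \in [m-1]$. Define $\delta_k = \frac{\sum_{S \subset [m-1], |S|=k} \prod_{i \in S} b_i}{\sum_{S \subset [m], |S|=k} \prod_{i \in S} b_i}$. Then $1 - \frac{k}{m} \leq \delta_k \leq \min\{1, \frac{b_1}{b_m} \cdot (1 - \frac{k}{m})\}$. -/
open Finset

theorem stmt0 (m : ℕ) (b : Fin m → ℝ)
    (hmono : ∀ i j : Fin m, i ≤ j → b j ≤ b i) (hpos : ∀ i, 0 < b i)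
    (k : ℕ) (hk1 : 1 ≤ k) (hk2 : k ≤ m - 1) :
    (1 : ℝ) - (k : ℝ) / m ≤
      (∑ S ∈ Finset.powersetCard k
          (Finset.univ.filter (fun i : Fin m => (i : ℕ) < m - 1)), ∏ i ∈ S, b i) /
      (∑ S ∈ Finset.powersetCard k (Finset.univ : Finset (Fin m)), ∏ i ∈ S, b i) ∧
    (∑ S ∈ Finset.powersetCard k
        (Finset.univ.filter (fun i : Fin m => (i : ℕ) < m - 1)), ∏ i ∈ S, b i) /
      (∑ S ∈ Finset.powersetCard k (Finset.univ : Finset (Fin m)), ∏ i ∈ S, b i) ≤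
    min 1 (b ⟨0, by omega⟩ / b ⟨m - 1, by omega⟩ * (1 - (k : ℝ) / m)) := by
  classical
  have hm : 2 ≤ m := by omega
  have hkm : k ≤ m := by omega
  set L : Fin m := ⟨m - 1, by omega⟩ with hLdef
  set z : Fin m := ⟨0, by omega⟩ with hzdef
  set P := Finset.powersetCard k (Finset.univ : Finset (Fin m)) with hP
  have hprod : ∀ S : Finset (Fin m), 0 < ∏ i ∈ S, b i :=
    fun S => Finset.prod_pos (fun i _ => hpos i)
  set T : Fin m → ℝ := fun i => ∑ S ∈ P.filter (fun S => i ∉ S), ∏ x ∈ S, b x with hT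
  -- the numerator equals T L
  have hset : Finset.powersetCard k
      (Finset.univ.filter (fun i : Fin m => (i : ℕ) < m - 1)) =
      P.filter (fun S => L ∉ S) := by
    ext S
    simp only [hP, Finset.mem_powersetCard, Finset.mem_filter, Finset.subset_iff,
      Finset.mem_filter, Finset.mem_univ, true_and]
    constructor
    · rintro ⟨hsub, hcard⟩
      refine ⟨⟨fun x _ => trivial, hcard⟩, fun hLS => ?_⟩
      have := hsub hLS
      simp only [hLdef] at this
      omega
    · rintro ⟨⟨_, hcard⟩, hLS⟩
      refine ⟨fun x hx => ?_, hcard⟩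
      have hxL : x ≠ L := fun h => hLS (h ▸ hx)
      have : (x : ℕ) ≠ m - 1 := by
        intro h; exact hxL (Fin.ext h)
      omega
  have hA : (∑ S ∈ Finset.powersetCard k
      (Finset.univ.filter (fun i : Fin m => (i : ℕ) < m - 1)), ∏ i ∈ S, b i) = T L := by
    rw [hset]
  set A : ℝ := T L with hAdef
  set N : ℝ := ∑ S ∈ P, ∏ i ∈ S, b i with hNdef
  have hN : 0 < N := by
    apply Finset.sum_pos (fun S _ => hprod S)
    rw [hP, Finset.powersetCard_nonempty]
    simpa using hkm
  -- core swap lemma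
  have core : ∀ (i j : Fin m) (c : ℝ), 0 ≤ c → c ≤ 1 → c * b j ≤ b i →
      c * T i ≤ T j := by
    intro i j c hc0 hc1 hcb
    set σ : Finset (Fin m) → Finset (Fin m) :=
      fun S => if j ∈ S then insert i (S.erase j) else S with hσ
    have hmem : ∀ S ∈ P.filter (fun S => i ∉ S), S.card = k ∧ i ∉ S := by
      intro S hS
      rw [Finset.mem_filter, hP, Finset.mem_powersetCard_univ] at hS
      exact hS
    have hmaps : ∀ S : Finset (Fin m), S.card = k → i ∉ S →
        (σ S).card = k ∧ j ∉ σ S := by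
      intro S hcard hiS
      by_cases hjS : j ∈ S
      · have hij : i ≠ j := fun h => hiS (h ▸ hjS)
        have hie : i ∉ S.erase j := fun h => hiS (Finset.mem_of_mem_erase h)
        have h1 : S.card ≠ 0 := by
          intro h; rw [Finset.card_eq_zero] at h; simp [h] at hjS
        constructor
        · rw [hσ]; simp only [if_pos hjS]
          rw [Finset.card_insert_of_notMem hie, Finset.card_erase_of_mem hjS]
          omega
        · rw [hσ]; simp only [if_pos hjS]
          intro h
          rcases Finset.mem_insert.mp h with h | h
          · exact hij h.symm
          · exact (Finset.notMem_erase j S) h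
      · refine ⟨?_, ?_⟩ <;> rw [hσ] <;> simp only [if_neg hjS]
        · exact hcard
        · exact hjS
    have hinv : ∀ S : Finset (Fin m), i ∉ S →
        ∀ S' : Finset (Fin m), i ∉ S' → σ S = σ S' → S = S' := by
      have key : ∀ S : Finset (Fin m), i ∉ S →
          (if i ∈ σ S then insert j ((σ S).erase i) else σ S) = S := by
        intro S hiS
        by_cases hjS : j ∈ S
        · have hij : i ≠ j := fun h => hiS (h ▸ hjS)
          have hie : i ∉ S.erase j := fun h => hiS (Finset.mem_of_mem_erase h)
          have h1 : σ S = insert i (S.erase j) := by rw [hσ]; simp [hjS]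
          have h2 : i ∈ σ S := by rw [h1]; exact Finset.mem_insert_self _ _
          rw [if_pos h2, h1, Finset.erase_insert hie, Finset.insert_erase hjS]
        · have h1 : σ S = S := by rw [hσ]; simp [hjS]
          rw [h1, if_neg hiS]
      intro S hS S' hS' h
      rw [← key S hS, ← key S' hS', h]
    have hterm : ∀ S : Finset (Fin m), i ∉ S →
        c * ∏ x ∈ S, b x ≤ ∏ x ∈ σ S, b x := by
      intro S hiS
      by_cases hjS : j ∈ S
      · have hie : i ∉ S.erase j := fun h => hiS (Finset.mem_of_mem_erase h)
        have h1 : σ S = insert i (S.erase j) := by rw [hσ]; simp [hjS]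
        rw [h1, Finset.prod_insert hie, ← Finset.mul_prod_erase S b hjS]
        have hpe : 0 < ∏ x ∈ S.erase j, b x := hprod _
        nlinarith [hcb, hpe]
      · have h1 : σ S = S := by rw [hσ]; simp [hjS]
        rw [h1]
        nlinarith [hprod S, hc1]
    calc c * T i = ∑ S ∈ P.filter (fun S => i ∉ S), c * ∏ x ∈ S, b x := by
          rw [hT, Finset.mul_sum]
      _ ≤ ∑ S ∈ P.filter (fun S => i ∉ S), ∏ x ∈ σ S, b x :=
          Finset.sum_le_sum (fun S hS => hterm S (hmem S hS).2)
      _ = ∑ S ∈ (P.filter (fun S => i ∉ S)).image σ, ∏ x ∈ S, b x := by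
          rw [Finset.sum_image]
          intro x hx y hy hxy
          exact hinv x (hmem x hx).2 y (hmem y hy).2 hxy
      _ ≤ T j := by
          rw [hT]
          apply Finset.sum_le_sum_of_subset_of_nonneg
          · intro S hS
            rcases Finset.mem_image.mp hS with ⟨S', hS', rfl⟩
            obtain ⟨hc, hi⟩ := hmem S' hS'
            obtain ⟨hc', hj⟩ := hmaps S' hc hi
            rw [Finset.mem_filter, hP, Finset.mem_powersetCard_univ]
            exact ⟨hc', hj⟩
          · intro S _ _; exact (hprod S).le
  -- double counting
  have hcount : ∑ i : Fin m, T i = ((m - k : ℕ) : ℝ) * N := by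
    rw [hT, hNdef, Finset.mul_sum]
    simp only [Finset.sum_filter]
    rw [Finset.sum_comm]
    apply Finset.sum_congr rfl
    intro S hS
    rw [← Finset.sum_filter, Finset.sum_const, nsmul_eq_mul]
    have hSc : S.card = k := by rwa [hP, Finset.mem_powersetCard_univ] at hS
    have hfc : Finset.univ.filter (fun i : Fin m => i ∉ S) = Sᶜ := by
      ext i; simp [Finset.mem_compl]
    rw [hfc, Finset.card_compl, hSc]
    simp
  have hmR : (0:ℝ) < m := by
    have : 0 < m := by omega
    exact_mod_cast this
  have hcast : ((m - k : ℕ) : ℝ) = (m:ℝ) - k := by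
    rw [Nat.cast_sub hkm]
  have hbz : 0 < b z := hpos z
  have hbL : 0 < b L := hpos L
  have hzL : z ≤ L := by
    rw [Fin.le_def]; simp [hzdef, hLdef]
  have hbLz : b L ≤ b z := hmono z L hzL
  have key1 : ((m:ℝ) - k) * N ≤ m * A := by
    rw [← hcast, ← hcount]
    calc ∑ i : Fin m, T i ≤ ∑ _i : Fin m, A := by
          apply Finset.sum_le_sum
          intro i _
          have hiL : i ≤ L := by
            rw [Fin.le_def]; simp only [hLdef]
            have := i.isLt; omega
          have := core i L 1 zero_le_one le_rfl (by rw [one_mul]; exact hmono i L hiL)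
          simpa using this
      _ = m * A := by simp [Finset.sum_const, nsmul_eq_mul]
  have key2 : (m:ℝ) * ((b L / b z) * A) ≤ ((m:ℝ) - k) * N := by
    rw [← hcast, ← hcount]
    calc (m:ℝ) * ((b L / b z) * A) = ∑ _i : Fin m, (b L / b z) * A := by
          simp [Finset.sum_const, nsmul_eq_mul]
      _ ≤ ∑ i : Fin m, T i := by
          apply Finset.sum_le_sum
          intro i _
          have hzi : z ≤ i := by
            rw [Fin.le_def]; simp [hzdef]
          have hbiz : b i ≤ b z := hmono z i hzi
          refine core L i (b L / b z) (by positivity) ((div_le_one hbz).mpr hbLz) ?_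
          rw [div_mul_eq_mul_div, div_le_iff₀ hbz]
          nlinarith
  constructor
  · rw [hA]
    have e : (1:ℝ) - (k:ℝ)/m = ((m:ℝ) - k)/m := by field_simp
    rw [e, div_le_div_iff₀ hmR hN]
    linarith [key1]
  · rw [hA]
    have hz0 : b ⟨0, by omega⟩ = b z := rfl
    have hL0 : b ⟨m - 1, by omega⟩ = b L := rfl
    rw [hz0, hL0]
    refine le_min ?_ ?_
    · rw [div_le_one hN, hAdef, hT, hNdef]
      exact Finset.sum_le_sum_of_subset_of_nonneg (Finset.filter_subset _ _)
        (fun S _ _ => (hprod S).le)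
    · have e : (1:ℝ) - (k:ℝ)/m = ((m:ℝ) - k)/m := by field_simp
      rw [e, div_le_iff₀ hN]
      have key2' : (m:ℝ) * (b L * A) ≤ b z * (((m:ℝ) - k) * N) := by
        have h2 : (m:ℝ) * (b L * A) / b z ≤ ((m:ℝ) - k) * N := by
          rw [mul_div_assoc, ← div_mul_eq_mul_div]
          exact key2
        rw [div_le_iff₀ hbz] at h2
        nlinarith [h2]
      have hrw : b z / b L * (((m:ℝ) - k)/m) * N = (b z * (((m:ℝ) - k) * N)) / (b L * m) := by
        field_simp
      rw [hrw, le_div_iff₀ (mul_pos hbL hmR)]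
      nlinarith [key2']
end

section
/- Let $b_1 \geq b_2 \geq \cdots \geq b_m > 0$ and $k \in [m-1]$. Then $\sum_{S \subset [m-1], |S|=k} \prod_{i \in S} b_i \geq \frac{m-k}{m} \sum_{S \subset [m], |S|=k} \prod_{i \in S} b_i$. -/
open Finset

lemma esymm_insert {α : Type*} [DecidableEq α] (b : α → ℝ) {x : α} {A : Finset α}
    (hx : x ∉ A) (n : ℕ) :
    ∑ S ∈ powersetCard (n+1) (insert x A), ∏ i ∈ S, b i =
      (∑ S ∈ powersetCard (n+1) A, ∏ i ∈ S, b i) +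
        b x * ∑ S ∈ powersetCard n A, ∏ i ∈ S, b i := by
  rw [powersetCard_succ_insert hx, sum_union, sum_image, mul_sum]
  · congr 1
    refine sum_congr rfl fun S hS => ?_
    rw [prod_insert (fun h => hx (mem_powersetCard.mp hS |>.1 h))]
  · intro S hS T hT h
    have hS' : x ∉ S := fun h' => hx (mem_powersetCard.mp hS |>.1 h')
    have hT' : x ∉ T := fun h' => hx (mem_powersetCard.mp hT |>.1 h')
    have := congrArg (fun T => Finset.erase T x) h
    simpa [erase_insert hS', erase_insert hT'] using this
  · rw [disjoint_right]
    intro S hS hS'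
    simp only [mem_image] at hS
    obtain ⟨T, hT, rfl⟩ := hS
    exact hx (mem_powersetCard.mp hS' |>.1 (mem_insert_self x T))

theorem stmt1 (m : ℕ) (b : Fin m → ℝ)
    (hmono : ∀ i j : Fin m, i ≤ j → b j ≤ b i) (hpos : ∀ i, 0 < b i)
    (k : ℕ) (hk1 : 1 ≤ k) (hk2 : k ≤ m - 1) :
    ((m : ℝ) - k) / m *
        (∑ S ∈ Finset.powersetCard k (Finset.univ : Finset (Fin m)), ∏ i ∈ S, b i) ≤
      ∑ S ∈ Finset.powersetCard k
          (Finset.univ.filter (fun i : Fin m => (i : ℕ) < m - 1)), ∏ i ∈ S, b i := by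
  have hm2 : 2 ≤ m := by omega
  set last : Fin m := ⟨m - 1, by omega⟩ with hlast
  have hfilt : (Finset.univ.filter (fun i : Fin m => (i : ℕ) < m - 1))
      = Finset.univ.erase last := by
    ext i
    have hv : (last : ℕ) = m - 1 := rfl
    simp only [mem_filter, mem_univ, true_and, mem_erase, and_true, Ne, Fin.ext_iff, hv]
    have := i.isLt
    omega
  set e : Finset (Fin m) → ℕ → ℝ := fun A n => ∑ S ∈ powersetCard n A, ∏ i ∈ S, b i
    with he
  have henonneg : ∀ A n, 0 ≤ e A n := fun A n =>
    sum_nonneg fun S _ => prod_nonneg fun i _ => (hpos i).le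
  -- Step B: each erased-sum is at most the last-erased sum
  have hB : ∀ j : Fin m, e (univ.erase j) k ≤ e (univ.erase last) k := by
    intro j
    rcases eq_or_ne j last with rfl | hj
    · exact le_refl _
    set A : Finset (Fin m) := (univ.erase last).erase j with hA
    have hlastA : last ∉ A := fun h => (notMem_erase last univ) (mem_of_mem_erase h)
    have hjA : j ∉ A := notMem_erase _ _
    have h1 : univ.erase j = insert last A := by
      rw [hA, erase_right_comm, insert_erase]
      exact mem_erase.mpr ⟨(Ne.symm hj), mem_univ _⟩
    have h2 : univ.erase last = insert j A := by
      rw [hA, insert_erase]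
      exact mem_erase.mpr ⟨hj, mem_univ _⟩
    obtain ⟨n, rfl⟩ : ∃ n, k = n + 1 := ⟨k - 1, by omega⟩
    rw [h1, h2, he]
    simp only
    rw [esymm_insert b hlastA n, esymm_insert b hjA n]
    have hble : b last ≤ b j := hmono j last (by
      simp only [Fin.le_def, hlast]
      have := j.isLt; omega)
    have := henonneg A n
    nlinarith [henonneg A n]
  -- Step A: counting identity
  have hA : ∑ j : Fin m, e (univ.erase j) k = (m - k : ℕ) * e univ k := by
    have hps : ∀ j : Fin m, powersetCard k (univ.erase j)
        = (powersetCard k univ).filter (fun S => j ∉ S) := by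
      intro j
      ext S
      simp only [mem_powersetCard, mem_filter, subset_erase, subset_univ, true_and]
      tauto
    calc ∑ j : Fin m, e (univ.erase j) k
        = ∑ j : Fin m, ∑ S ∈ (powersetCard k univ).filter (fun S => j ∉ S),
            ∏ i ∈ S, b i := by
          refine sum_congr rfl fun j _ => ?_
          rw [he]; simp only; rw [hps j]
      _ = ∑ j : Fin m, ∑ S ∈ powersetCard k univ,
            if j ∉ S then ∏ i ∈ S, b i else 0 := by
          refine sum_congr rfl fun j _ => ?_
          rw [sum_filter]
      _ = ∑ S ∈ powersetCard k univ, ∑ j : Fin m,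
            if j ∉ S then ∏ i ∈ S, b i else 0 := sum_comm
      _ = ∑ S ∈ powersetCard k univ, (m - k : ℕ) * ∏ i ∈ S, b i := by
          refine sum_congr rfl fun S hS => ?_
          rw [← sum_filter, sum_const, nsmul_eq_mul]
          congr 2
          have : univ.filter (fun j => j ∉ S) = Sᶜ := by
            ext j; simp
          rw [this, card_compl, (mem_powersetCard.mp hS).2, Fintype.card_fin]
      _ = (m - k : ℕ) * e univ k := by rw [he, mul_sum]
  -- Assemble
  rw [hfilt]
  have hsum : ∑ j : Fin m, e (univ.erase j) k ≤ (m : ℝ) * e (univ.erase last) k := by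
    calc ∑ j : Fin m, e (univ.erase j) k ≤ ∑ _j : Fin m, e (univ.erase last) k :=
          sum_le_sum fun j _ => hB j
      _ = (m : ℝ) * e (univ.erase last) k := by
          rw [sum_const, card_univ, Fintype.card_fin, nsmul_eq_mul]
  rw [hA] at hsum
  have hmpos : (0 : ℝ) < m := by positivity
  rw [div_mul_eq_mul_div, div_le_iff₀ hmpos]
  have hcast : ((m : ℝ) - k) = ((m - k : ℕ) : ℝ) := by
    rw [Nat.cast_sub (by omega)]
  rw [hcast]
  calc ((m - k : ℕ) : ℝ) * e univ k ≤ (m : ℝ) * e (univ.erase last) k := hsum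
    _ = e (univ.erase last) k * m := mul_comm _ _
end

section
/- Let $\mathbf{B} \in \mathbb{R}^{n \times d}$ and $\mathbf{C} \in \mathbb{R}^{n \times m}$, and set $\mathbf{M} = [\mathbf{B}, \mathbf{C}]$ and $\mathbf{Q} = \mathbf{I}_n - \mathbf{B}\mathbf{B}^{\dagger}$. Then $\mathbf{M}\mathbf{M}^{\dagger} = \mathbf{B}\mathbf{B}^{\dagger} + (\mathbf{Q}\mathbf{C})(\mathbf{Q}\mathbf{C})^{\dagger}$. -/
open Matrix

/-- The four Penrose conditions characterizing the Moore-Penrose pseudoinverse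
of a real matrix. -/
def IsMoorePenrose {m n : Type*} [Fintype m] [Fintype n]
    (A : Matrix m n ℝ) (Ap : Matrix n m ℝ) : Prop :=
  A * Ap * A = A ∧ Ap * A * Ap = Ap ∧ (A * Ap)ᵀ = A * Ap ∧ (Ap * A)ᵀ = Ap * A

theorem stmt3 (n d m : ℕ) (B : Matrix (Fin n) (Fin d) ℝ) (C : Matrix (Fin n) (Fin m) ℝ)
    (Bp : Matrix (Fin d) (Fin n) ℝ) (hBp : IsMoorePenrose B Bp)
    (Mp : Matrix (Fin d ⊕ Fin m) (Fin n) ℝ)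
    (hMp : IsMoorePenrose (Matrix.fromCols B C) Mp)
    (QCp : Matrix (Fin m) (Fin n) ℝ)
    (hQCp : IsMoorePenrose (((1 : Matrix (Fin n) (Fin n) ℝ) - B * Bp) * C) QCp) :
    Matrix.fromCols B C * Mp =
      B * Bp + (((1 : Matrix (Fin n) (Fin n) ℝ) - B * Bp) * C) * QCp := by
  obtain ⟨hB1, hB2, hB3, _⟩ := hBp
  obtain ⟨hM1, hM2, hM3, _⟩ := hMp
  obtain ⟨hQ1, hQ2, hQ3, _⟩ := hQCp
  set P : Matrix (Fin n) (Fin n) ℝ := B * Bp with hP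
  set Q : Matrix (Fin n) (Fin n) ℝ := 1 - P with hQ
  set QC : Matrix (Fin n) (Fin m) ℝ := Q * C with hQC
  set R : Matrix (Fin n) (Fin n) ℝ := QC * QCp with hR
  set S : Matrix (Fin n) (Fin n) ℝ := Matrix.fromCols B C * Mp with hS
  -- basic facts
  have hPP : P * P = P := by
    nth_rewrite 2 [hP]
    rw [← Matrix.mul_assoc, hB1, ← hP]
  have hPsym : Pᵀ = P := hB3
  have hSsym : Sᵀ = S := hM3
  have hRsym : Rᵀ = R := hQ3
  have hQsym : Qᵀ = Q := by rw [hQ, transpose_sub, transpose_one, hPsym]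
  have hQQ : Q * Q = Q := by
    rw [hQ, Matrix.sub_mul, Matrix.one_mul, Matrix.mul_sub, Matrix.mul_one, hPP]
    abel
  have hQB : Q * B = 0 := by
    rw [hQ, Matrix.sub_mul, Matrix.one_mul, hB1, sub_self]
  -- S * B = B and S * C = C
  have hSM : Matrix.fromCols (S * B) (S * C) = Matrix.fromCols B C := by
    rw [← Matrix.mul_fromCols]; exact hM1
  obtain ⟨hSB, hSC⟩ := (fromCols_inj.eq_iff).mp hSM
  have hSP : S * P = P := by rw [hP, ← Matrix.mul_assoc, hSB]
  have hSQC : S * QC = QC := by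
    rw [hQC, hQ, Matrix.sub_mul, Matrix.one_mul, Matrix.mul_sub, hSC,
      ← Matrix.mul_assoc, hSP]
  have hSR : S * R = R := by rw [hR, ← Matrix.mul_assoc, hSQC]
  have h1 : S * (P + R) = P + R := by rw [Matrix.mul_add, hSP, hSR]
  have h2 : (P + R) * S = P + R := by
    have := congrArg Matrix.transpose h1
    rwa [Matrix.transpose_mul, Matrix.transpose_add, hPsym, hRsym, hSsym] at this
  -- (P + R) * M = M
  have hQR : Q * R = R := by
    rw [hR, hQC, ← Matrix.mul_assoc, ← Matrix.mul_assoc, hQQ]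
  have hRQ : R * Q = R := by
    have := congrArg Matrix.transpose hQR
    rwa [Matrix.transpose_mul, hQsym, hRsym] at this
  have hRB : R * B = 0 := by rw [← hRQ, Matrix.mul_assoc, hQB, Matrix.mul_zero]
  have hQP : Q * P = 0 := by rw [hQ, Matrix.sub_mul, Matrix.one_mul, hPP, sub_self]
  have hRP : R * P = 0 := by rw [← hRQ, Matrix.mul_assoc, hQP, Matrix.mul_zero]
  have hRQC : R * QC = QC := hQ1
  have hCsplit : C = P * C + QC := by
    rw [hQC, hQ, Matrix.sub_mul, Matrix.one_mul]; abel
  have hRC : R * C = QC := by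
    nth_rewrite 1 [hCsplit]
    rw [Matrix.mul_add, ← Matrix.mul_assoc, hRP, Matrix.zero_mul, zero_add, hRQC]
  have hPRB : (P + R) * B = B := by rw [Matrix.add_mul, hB1, hRB, add_zero]
  have hPRC : (P + R) * C = C := by
    rw [Matrix.add_mul, hRC]
    exact hCsplit.symm
  have h3 : (P + R) * S = S := by
    rw [hS, ← Matrix.mul_assoc, Matrix.mul_fromCols, hPRB, hPRC]
  calc S = (P + R) * S := h3.symm
  _ = P + R := h2
end

section
/- Let $\mathbf{A} \in \mathbb{R}^{d \times d}$ be a square matrix and let $\mathbf{v} \in \mathbb{R}^d$ be a random vector (with finitely supported or integrable distribution). Then $\mathbb{E}\,\det[\mathbf{A} + \mathbf{v}\mathbf{v}^{\rm T}] = (1 + \partial_t)\,\det[\mathbf{A} + t \cdot \mathbb{E}[\mathbf{v}\mathbf{v}^{\rm T}]]\big|_{t=0}$, i.e., the expected determinant equals $\det[\mathbf{A} + t\,\mathbb{E}\mathbf{v}\mathbf{v}^{\rm T}]$ plus its derivative in $t$, evaluated at $t = 0$. -/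
open Matrix Polynomial

section Helpers

variable {n : Type*} [Fintype n] [DecidableEq n] {R : Type*} [CommRing R]

omit [Fintype n] [CommRing R] in
lemma my_update_piecewise (f g : n → n → R) (s : Finset n) {j : n} (hj : j ∉ s) (x : n → R) :
    Function.update (s.piecewise f g) j x = s.piecewise f (Function.update g j x) := by
  funext i
  by_cases hi : i = j
  · subst hi
    simp [Function.update_self, Finset.piecewise_eq_of_notMem _ _ _ hj]
  · by_cases his : i ∈ s <;>
      simp [Function.update_of_ne hi, Finset.piecewise_eq_of_mem _ _ _, his,
        Finset.piecewise_eq_of_notMem _ _ _]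

lemma my_det_update_smul (A : Matrix n n R) (j : n) (c : R) (r : n → R) :
    Matrix.det (Function.update A j (c • r)) = c * Matrix.det (Function.update A j r) :=
  Matrix.det_updateRow_smul A j c r

lemma det_piecewise_smul (c : R) (M : Matrix n n R) (s : Finset n) :
    ∀ A : Matrix n n R, Matrix.det (s.piecewise (c • M) A)
      = c ^ s.card * Matrix.det (s.piecewise M A) := by
  classical
  induction s using Finset.induction with
  | empty => intro A; erw [Finset.piecewise_empty]; simp
  | @insert j s hj ih =>
    intro A
    have hcM : (c • M) j = c • M j := rfl
    erw [Finset.piecewise_insert, Finset.piecewise_insert]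
    rw [hcM]
    erw [
      my_det_update_smul, my_update_piecewise _ _ _ hj, my_update_piecewise _ _ _ hj, ih,
      Finset.card_insert_of_notMem hj, pow_succ]
    ring

lemma det_add_expand (A M : Matrix n n R) :
    (A + M).det = ∑ s : Finset n, Matrix.det (s.piecewise M A) := by
  rw [add_comm]
  exact (Matrix.detRowAlternating : (n → R) [⋀^n]→ₗ[R] R).toMultilinearMap.map_add_univ M A

lemma sum_card_le_one (f : Finset n → R) (hf : ∀ s : Finset n, 2 ≤ s.card → f s = 0) :
    ∑ s : Finset n, f s = f ∅ + ∑ j : n, f {j} := by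
  classical
  have hsplit : ∀ s : Finset n,
      f s = (if s = ∅ then f s else 0) + (if s.card = 1 then f s else 0) := by
    intro s
    by_cases h0 : s = ∅
    · subst h0; simp
    · by_cases h1 : s.card = 1
      · simp [h0, h1]
      · have h2 : 2 ≤ s.card := by
          have := Finset.card_pos.mpr (Finset.nonempty_of_ne_empty h0)
          omega
        simp [h0, h1, hf s h2]
  rw [Finset.sum_congr rfl fun s _ => hsplit s, Finset.sum_add_distrib]
  congr 1
  · simp
  · rw [← Finset.sum_filter]
    have him : Finset.univ.filter (fun s : Finset n => s.card = 1)
        = Finset.univ.image (fun j : n => ({j} : Finset n)) := by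
      ext s
      simp [Finset.card_eq_one, eq_comm]
    rw [him, Finset.sum_image (fun a _ b _ h => Finset.singleton_injective h)]

lemma poly_expand (A M : Matrix n n R) :
    Matrix.det (A.map C + (X : R[X]) • M.map C)
      = ∑ s : Finset n, (X : R[X]) ^ s.card * C (Matrix.det (s.piecewise M A)) := by
  rw [det_add_expand]
  refine Finset.sum_congr rfl fun s _ => ?_
  rw [det_piecewise_smul]
  congr 1
  have hpm : (s.piecewise (M.map C) (A.map C) : Matrix n n R[X])
      = Matrix.map (s.piecewise M A) C := by
    funext i k
    by_cases his : i ∈ s <;>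
      (erw [Matrix.map_apply]; simp [Matrix.map_apply, Finset.piecewise, his])
  rw [hpm]
  exact ((RingHom.map_det (C : R →+* R[X]) (s.piecewise M A))).symm

lemma key (A M : Matrix n n R) :
    (Matrix.det (A.map C + (X : R[X]) • M.map C)).eval 0
      + (derivative (Matrix.det (A.map C + (X : R[X]) • M.map C))).eval 0
    = A.det + ∑ j : n, (A.updateRow j (M j)).det := by
  rw [poly_expand, eval_finset_sum, map_sum, eval_finset_sum, ← Finset.sum_add_distrib]
  rw [sum_card_le_one (R := R)
    (f := fun s => ((X : R[X]) ^ s.card * C (Matrix.det (s.piecewise M A))).eval 0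
      + (derivative ((X : R[X]) ^ s.card * C (Matrix.det (s.piecewise M A)))).eval 0)]
  · congr 1
    · simp
      erw [Finset.piecewise_empty]
    · refine Finset.sum_congr rfl fun j _ => ?_
      rw [Finset.card_singleton]
      erw [Finset.piecewise_singleton]
      have hup : Function.update A j (M j) = A.updateRow j (M j) := rfl
      rw [hup]
      simp [derivative_mul]
  · intro s hs
    obtain ⟨m, hm⟩ : ∃ m, s.card = m + 2 := ⟨s.card - 2, by omega⟩
    simp [hm, derivative_pow, pow_succ, eval_mul, derivative_mul]

lemma det_updateRow_finset_sum (A : Matrix n n R) (j : n) {α : Type*} (t : Finset α)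
    (r : α → n → R) :
    (A.updateRow j (∑ i ∈ t, r i)).det = ∑ i ∈ t, (A.updateRow j (r i)).det := by
  classical
  induction t using Finset.induction with
  | empty =>
    rw [Finset.sum_empty, Finset.sum_empty]
    exact Matrix.det_eq_zero_of_row_eq_zero j (by simp)
  | @insert a t ha ih =>
    rw [Finset.sum_insert ha, Matrix.det_updateRow_add, ih, Finset.sum_insert ha]

lemma det_rank_one_update (A : Matrix n n R) (u : n → R) :
    (A + Matrix.vecMulVec u u).det
      = A.det + ∑ j : n, (A.updateRow j (Matrix.vecMulVec u u j)).det := by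
  classical
  rw [det_add_expand, sum_card_le_one (R := R)]
  · congr 1
    refine Finset.sum_congr rfl fun j _ => ?_
    erw [Finset.piecewise_singleton]
    rfl
  · intro s hs
    have h12 : 1 < s.card := by omega
    obtain ⟨i, hi, j, hj, hij⟩ := Finset.one_lt_card.mp h12
    set B := s.piecewise (Matrix.vecMulVec u u) A with hB
    have hrow : ∀ k ∈ s, B k = u k • u := by
      intro k hk
      funext l
      simp [hB, Finset.piecewise_eq_of_mem _ _ _ hk, Matrix.vecMulVec_apply, smul_eq_mul]
      erw [Finset.piecewise_eq_of_mem _ _ _ hk]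
      simp [Matrix.vecMulVec_apply]
    have h1 : B = Function.update B i (u i • u) := by
      rw [← hrow i hi]; exact (Function.update_eq_self i B).symm
    have hxj : Function.update B i u j = u j • u := by
      rw [Function.update_of_ne (Ne.symm hij)]; exact hrow j hj
    have h2 : Function.update B i u = Function.update (Function.update B i u) j (u j • u) := by
      rw [← hxj]
      exact (Function.update_eq_self j _).symm
    calc Matrix.det B = Matrix.det (Function.update B i (u i • u)) := by rw [← h1]
      _ = u i * Matrix.det (Function.update B i u) := my_det_update_smul _ _ _ _
      _ = u i * Matrix.det (Function.update (Function.update B i u) j (u j • u)) := by rw [← h2]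
      _ = u i * (u j * Matrix.det (Function.update (Function.update B i u) j u)) := by
          exact congrArg (u i * ·) (my_det_update_smul _ _ _ _)
      _ = 0 := by
        erw [Matrix.det_zero_of_row_eq hij (by
          show Function.update (Function.update B i u) j u i
            = Function.update (Function.update B i u) j u j
          rw [Function.update_of_ne hij, Function.update_self, Function.update_self])]
        ring

end Helpers

theorem stmt5 (d : ℕ) (ι : Type*) [Fintype ι] (w : ι → ℝ) (hw0 : ∀ i, 0 ≤ w i)
    (hw1 : ∑ i, w i = 1) (v : ι → Fin d → ℝ) (A : Matrix (Fin d) (Fin d) ℝ) :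
    ∑ i, w i * (A + Matrix.vecMulVec (v i) (v i)).det =
      (A.map Polynomial.C + (Polynomial.X : Polynomial ℝ) •
          (∑ i, w i • Matrix.vecMulVec (v i) (v i)).map Polynomial.C).det.eval 0 +
        (Polynomial.derivative
          (A.map Polynomial.C + (Polynomial.X : Polynomial ℝ) •
            (∑ i, w i • Matrix.vecMulVec (v i) (v i)).map Polynomial.C).det).eval 0 := by
  rw [key]
  have hMj : ∀ j, (∑ i, w i • Matrix.vecMulVec (v i) (v i)) j
      = ∑ i, w i • Matrix.vecMulVec (v i) (v i) j := by
    intro j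
    funext k
    simp [Matrix.sum_apply]
  have hterm : ∀ j, (A.updateRow j ((∑ i, w i • Matrix.vecMulVec (v i) (v i)) j)).det
      = ∑ i, w i * (A.updateRow j (Matrix.vecMulVec (v i) (v i) j)).det := by
    intro j
    rw [hMj j, det_updateRow_finset_sum]
    exact Finset.sum_congr rfl fun i _ => Matrix.det_updateRow_smul A j (w i) _
  have hexp : ∀ i : ι, w i * (A + Matrix.vecMulVec (v i) (v i)).det
      = w i * A.det + w i * ∑ j, (A.updateRow j (Matrix.vecMulVec (v i) (v i) j)).det := by
    intro i; rw [det_rank_one_update, mul_add]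
  rw [Finset.sum_congr rfl fun i _ => hexp i, Finset.sum_add_distrib, ← Finset.sum_mul, hw1,
    one_mul]
  congr 1
  rw [Finset.sum_congr rfl fun j (_ : j ∈ (Finset.univ : Finset (Fin d))) => hterm j,
    Finset.sum_comm]
  exact Finset.sum_congr rfl fun i _ => Finset.mul_sum _ _ _
end

section
/- Let $\lambda_1, \ldots, \lambda_m$ be real numbers each at most $1$, and let $b > 1$. Define $\alpha = \frac{1}{m}\sum_i \lambda_i$, $\beta = \frac{1}{m}\sum_i \lambda_i^2$, $t = \frac{\alpha - \beta}{1 - \alpha}$ and $s = \frac{\beta - \alpha^2}{1 - 2\alpha + \beta}$ (assuming $\alpha < 1$ and $1 - 2\alpha + \beta \neq 0$). Then $\sum_{i=1}^m \frac{1}{b - \lambda_i} \leq \frac{ms}{b - 1} + \frac{m(1-s)}{b - t}$. -/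
set_option maxHeartbeats 1000000


theorem stmt8 (m : ℕ) (lam : Fin m → ℝ) (hlam : ∀ i, lam i ≤ 1) (b : ℝ) (hb : 1 < b)
    (α β t s : ℝ) (hα : α = (∑ i, lam i) / m) (hβ : β = (∑ i, lam i ^ 2) / m)
    (hα1 : α < 1) (hden : 1 - 2 * α + β ≠ 0)
    (ht : t = (α - β) / (1 - α)) (hs : s = (β - α ^ 2) / (1 - 2 * α + β)) :
    ∑ i, 1 / (b - lam i) ≤ m * s / (b - 1) + m * (1 - s) / (b - t) := by
  rcases Nat.eq_zero_or_pos m with hm | hm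
  · subst hm
    simp at hα hβ
    subst hα hβ
    norm_num at ht hs
    simp [ht, hs]
  have hmR : (0:ℝ) < m := by exact_mod_cast hm
  have hb1 : (0:ℝ) < b - 1 := by linarith
  have hb0 : (0:ℝ) < b := by linarith
  have h1α : (0:ℝ) < 1 - α := by linarith
  have h1 : (∑ i, lam i) = (m:ℝ) * α := by
    rw [hα]; field_simp
  have h2 : (∑ i, lam i ^ 2) = (m:ℝ) * β := by
    rw [hβ]; field_simp
  have key : (m:ℝ) * (1 - 2*α + β) = ∑ i, (1 - lam i)^2 := by
    have : ∑ i, (1 - lam i)^2 = ∑ i, (1 - 2*lam i + lam i^2) := by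
      apply Finset.sum_congr rfl; intro i _; ring
    rw [this, Finset.sum_add_distrib, Finset.sum_sub_distrib, Finset.sum_const,
      Finset.card_univ, Fintype.card_fin, ← Finset.mul_sum, h1, h2]
    push_cast; ring
  have hD : 0 < 1 - 2*α + β := by
    rcases lt_or_eq_of_le (show 0 ≤ 1 - 2*α + β by
      by_contra h
      push_neg at h
      have hsum : 0 ≤ ∑ i, (1 - lam i)^2 :=
        Finset.sum_nonneg fun i _ => sq_nonneg _
      nlinarith) with h | h
    · exact h
    · exact absurd h.symm (by simpa using hden)
  have htlt : t < 1 := by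
    rw [ht, div_lt_one h1α]; linarith
  have hbt : (0:ℝ) < b - t := by linarith
  set c2 : ℝ := ((b-1)*(b-t)^2)⁻¹ with hc2def
  set c1 : ℝ := c2*(b-1-2*t) with hc1def
  set c0 : ℝ := (1 + c2*t^2)/b with hc0def
  have hc2 : 0 < c2 := by rw [hc2def]; positivity
  have hid : ∀ x : ℝ, (b-x) * (c0 + c1*x + c2*x^2) = 1 + c2*(1-x)*(x-t)^2 := by
    intro x
    rw [hc0def, hc1def, hc2def]
    field_simp
    ring
  have pointw : ∀ i, 1/(b - lam i) ≤ c0 + c1*(lam i) + c2*(lam i)^2 := by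
    intro i
    have hbx : 0 < b - lam i := by have := hlam i; linarith
    rw [div_le_iff₀ hbx]
    have := hid (lam i)
    have hnn : 0 ≤ c2*(1 - lam i)*(lam i - t)^2 := by
      have := hlam i
      have : (0:ℝ) ≤ 1 - lam i := by linarith
      positivity
    nlinarith [hid (lam i)]
  have hsum : ∑ i, 1/(b - lam i) ≤ ∑ i, (c0 + c1*(lam i) + c2*(lam i)^2) :=
    Finset.sum_le_sum fun i _ => pointw i
  have hsum2 : ∑ i, (c0 + c1*(lam i) + c2*(lam i)^2)
      = (m:ℝ)*(c0 + c1*α + c2*β) := by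
    rw [Finset.sum_add_distrib, Finset.sum_add_distrib, Finset.sum_const,
      Finset.card_univ, Fintype.card_fin, ← Finset.mul_sum, ← Finset.mul_sum, h1, h2]
    push_cast; ring
  have hmom1 : s + (1-s)*t = α := by
    rw [hs, ht]; field_simp [show 1 - α * 2 + β ≠ 0 by intro h; apply hden; linarith]; ring
  have hmom2 : s + (1-s)*t^2 = β := by
    rw [hs, ht]; field_simp [show 1 - α * 2 + β ≠ 0 by intro h; apply hden; linarith]; ring
  have hq1 : c0 + c1*1 + c2*1^2 = 1/(b-1) := by
    have := hid 1
    rw [eq_div_iff hb1.ne']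
    nlinarith [hid 1]
  have hqt : c0 + c1*t + c2*t^2 = 1/(b-t) := by
    rw [eq_div_iff hbt.ne']
    nlinarith [hid t]
  have hfin : c0 + c1*α + c2*β = s*(1/(b-1)) + (1-s)*(1/(b-t)) := by
    rw [← hmom1, ← hmom2, ← hq1, ← hqt]; ring
  calc ∑ i, 1/(b - lam i) ≤ (m:ℝ)*(c0 + c1*α + c2*β) := by rw [← hsum2]; exact hsum
    _ = m * s / (b - 1) + m * (1 - s) / (b - t) := by rw [hfin]; ring
end

section
/- For any positive integer $l$ and any polynomial $p(x)$, the Laguerre derivative operator satisfies the identity $(\partial_x \cdot x \cdot \partial_x)^l\, p(x) = \partial_x^l \cdot x^l \cdot \partial_x^l\, p(x)$, i.e., applying $l$ times the operator $p \mapsto (x p')'$ is the same as differentiating $l$ times, multiplying by $x^l$, and differentiating $l$ more times. -/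
/-!
Both sides are `R`-linear in `p`, so it suffices to compare them on the monomials `X ^ n`.
The Laguerre derivative sends `X ^ n` to `n ^ 2 X ^ (n - 1)`, so its `l`-th iterate gives
`(n.descFactorial l) ^ 2 X ^ (n - l)`; on the other side, `∂^l` brings down one factor
`n.descFactorial l`, multiplying by `X ^ l` restores the degree `n`, and `∂^l` brings down the
same factor again.
-/

open Polynomial

namespace Polynomial

variable {R : Type*} [CommSemiring R]

noncomputable def laguerreDeriv : Module.End R R[X] :=
  derivative ∘ₗ LinearMap.mulLeft R X ∘ₗ derivative

theorem laguerreDeriv_apply (p : R[X]) : laguerreDeriv p = derivative (X * derivative p) := rfl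

theorem laguerreDeriv_X_pow (n : ℕ) :
    laguerreDeriv (X ^ n : R[X]) = C ((n : R) ^ 2) * X ^ (n - 1) := by
  rcases n with _ | n
  · simp [laguerreDeriv_apply]
  · rw [laguerreDeriv_apply, derivative_X_pow, add_tsub_cancel_right, mul_left_comm, ← pow_succ',
      derivative_C_mul, derivative_X_pow, add_tsub_cancel_right, ← mul_assoc, ← C_mul, sq]

theorem iterate_laguerreDeriv_X_pow (l n : ℕ) :
    laguerreDeriv^[l] (X ^ n : R[X]) = C ((n.descFactorial l : R) ^ 2) * X ^ (n - l) := by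
  induction l with
  | zero => simp
  | succ l ih =>
    rw [Function.iterate_succ_apply', ih, ← smul_eq_C_mul, map_smul, laguerreDeriv_X_pow,
      smul_eq_C_mul, ← mul_assoc, ← C_mul, Nat.descFactorial_succ, Nat.sub_sub]
    push_cast
    ring_nf

theorem iterate_derivative_X_pow_mul_iterate_derivative_X_pow (l n : ℕ) :
    derivative^[l] (X ^ l * derivative^[l] (X ^ n : R[X])) =
      C ((n.descFactorial l : R) ^ 2) * X ^ (n - l) := by
  rcases le_or_gt l n with hln | hnl
  · rw [iterate_derivative_X_pow_eq_C_mul, mul_left_comm, ← pow_add, Nat.add_sub_cancel' hln,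
      iterate_derivative_C_mul, iterate_derivative_X_pow_eq_C_mul, ← mul_assoc, ← C_mul, sq]
  · simp [iterate_derivative_X_pow_eq_C_mul, Nat.descFactorial_eq_zero_iff_lt.mpr hnl]

theorem laguerreDeriv_pow (l : ℕ) :
    (laguerreDeriv : Module.End R R[X]) ^ l =
      derivative ^ l * LinearMap.mulLeft R (X ^ l) * derivative ^ l := by
  refine lhom_ext' fun n => LinearMap.ext_ring ?_
  simp only [LinearMap.comp_apply, Module.End.mul_apply, Module.End.coe_pow,
    LinearMap.mulLeft_apply, monomial_one_right_eq_X_pow]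
  rw [iterate_laguerreDeriv_X_pow, iterate_derivative_X_pow_mul_iterate_derivative_X_pow]

end Polynomial

theorem stmt10_general (l : ℕ) (p : Polynomial ℝ) :
    (fun q => Polynomial.derivative (Polynomial.X * Polynomial.derivative q))^[l] p =
      Polynomial.derivative^[l] (Polynomial.X ^ l * Polynomial.derivative^[l] p) := by
  have h := LinearMap.congr_fun (laguerreDeriv_pow (R := ℝ) l) p
  simp only [Module.End.mul_apply, Module.End.coe_pow, LinearMap.mulLeft_apply] at h
  exact h

theorem stmt10 (l : ℕ) (hl : 0 < l) (p : Polynomial ℝ) :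
    (fun q => Polynomial.derivative (Polynomial.X * Polynomial.derivative q))^[l] p =
      Polynomial.derivative^[l] (Polynomial.X ^ l * Polynomial.derivative^[l] p) :=
  stmt10_general l p
end

section
/- Let $\mathbf{A} \in \mathbb{R}^{n \times d}$, $\mathbf{B} \in \mathbb{R}^{n \times m}$, and let $0 \leq k \leq d$, $0 \leq r \leq m$. Then $\sum_{|S|=k, S \subset [d]} \sum_{|R|=r, R \subset [m]} \det\left[\begin{pmatrix} \mathbf{A}_{:,S}^{\rm T} \\ \mathbf{B}_{:,R}^{\rm T} \end{pmatrix}\begin{pmatrix} \mathbf{A}_{:,S} & \mathbf{B}_{:,R} \end{pmatrix}\right]$ equals the coefficient of $x^{2k}y^{2r}$ in $\det\left[\mathbf{I}_{d+m} + \begin{pmatrix} x\mathbf{A}^{\rm T} \\ y\mathbf{B}^{\rm T} \end{pmatrix}\begin{pmatrix} x\mathbf{A} & y\mathbf{B} \end{pmatrix}\right]$, viewed as a polynomial in $x$ and $y$. -/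
open Matrix Finset

section aux
variable {ι R : Type*} [DecidableEq ι] [Fintype ι] [CommRing R]

lemma my_det_piecewise (M : Matrix ι ι R) (S : Finset ι) :
    Matrix.det (Matrix.of (S.piecewise M (1 : Matrix ι ι R))) =
      Matrix.det (M.submatrix (Subtype.val : {i // i ∈ S} → ι) Subtype.val) := by
  classical
  let e : {i // i ∈ S} ⊕ {i // ¬ i ∈ S} ≃ ι := Equiv.sumCompl (· ∈ S)
  refine (Matrix.det_submatrix_equiv_self e (Matrix.of (S.piecewise M (1 : Matrix ι ι R)))).symm.trans ?_
  have h : Matrix.submatrix (Matrix.of (S.piecewise M (1 : Matrix ι ι R))) e e =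
      Matrix.fromBlocks (M.submatrix Subtype.val Subtype.val)
        (M.submatrix Subtype.val Subtype.val) 0 1 := by
    ext i j
    cases i with
    | inl i =>
      cases j with
      | inl j => simp [e, Matrix.submatrix_apply, Matrix.of_apply, Finset.piecewise_eq_of_mem S M (1 : Matrix ι ι R) i.2]
      | inr j => simp [e, Matrix.submatrix_apply, Matrix.of_apply, Finset.piecewise_eq_of_mem S M (1 : Matrix ι ι R) i.2]
    | inr i =>
      cases j with
      | inl j =>
        have hij : (i : ι) ≠ (j : ι) := fun h => i.2 (h ▸ j.2)
        simp [e, Matrix.submatrix_apply, Matrix.of_apply, Finset.piecewise_eq_of_notMem S M (1 : Matrix ι ι R) i.2, Matrix.one_apply_ne hij]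
      | inr j =>
        simp [e, Matrix.submatrix_apply, Matrix.of_apply, Finset.piecewise_eq_of_notMem S M (1 : Matrix ι ι R) i.2, Matrix.one_apply,
          Subtype.val_inj]
  rw [h, Matrix.det_fromBlocks_zero₂₁, Matrix.det_one, mul_one]

lemma my_det_one_add (M : Matrix ι ι R) :
    Matrix.det (1 + M) = ∑ T : Finset ι,
      Matrix.det (M.submatrix (Subtype.val : {i // i ∈ T} → ι) Subtype.val) := by
  have h1 : (1 + M : Matrix ι ι R) = M + 1 := add_comm _ _
  have h2 := (Matrix.detRowAlternating (R := R) (n := ι)).toMultilinearMap.map_add_univ M (1 : Matrix ι ι R)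
  rw [h1]
  have h3 : Matrix.det (M + 1) = ∑ s : Finset ι,
      Matrix.det (Matrix.of (s.piecewise M (1 : Matrix ι ι R))) := h2
  rw [h3]
  exact Finset.sum_congr rfl fun T _ => my_det_piecewise M T

end aux

def myFinsetSumEquiv {α β : Type*} [DecidableEq α] [DecidableEq β] :
    Finset α × Finset β ≃ Finset (α ⊕ β) where
  toFun p := p.1.disjSum p.2
  invFun T := (T.toLeft, T.toRight)
  left_inv p := by simp
  right_inv T := Finset.toLeft_disjSum_toRight

def myDisjSumEquiv {α β : Type*} (S : Finset α) (R : Finset β) :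
    ({i // i ∈ S} ⊕ {j // j ∈ R}) ≃ {t // t ∈ S.disjSum R} where
  toFun z := ⟨Sum.map Subtype.val Subtype.val z, by
    cases z with
    | inl i => simpa [Finset.inl_mem_disjSum] using i.2
    | inr j => simpa [Finset.inr_mem_disjSum] using j.2⟩
  invFun t := match t with
    | ⟨Sum.inl i, h⟩ => Sum.inl ⟨i, Finset.inl_mem_disjSum.mp h⟩
    | ⟨Sum.inr j, h⟩ => Sum.inr ⟨j, Finset.inr_mem_disjSum.mp h⟩
  left_inv z := by rcases z with i | j <;> rfl
  right_inv t := by rcases t with ⟨i | j, h⟩ <;> rfl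

section aux2

variable {R : Type*} [CommRing R]

lemma my_gram_submatrix {n ι κ : Type*} [Fintype n] (D : Matrix n ι R) (f : κ → ι) :
    (Dᵀ * D).submatrix f f = (D.submatrix id f)ᵀ * (D.submatrix id f) := by
  ext i j
  simp [Matrix.mul_apply]

lemma my_submatrix_fromColumns {n n₁ n₂ m₁ m₂ : Type*}
    (A : Matrix n n₁ R) (B : Matrix n n₂ R) (g : m₁ → n₁) (h : m₂ → n₂) :
    (Matrix.fromCols A B).submatrix id (Sum.map g h) =
      Matrix.fromCols (A.submatrix id g) (B.submatrix id h) := by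
  ext i j
  cases j <;> rfl

lemma my_fromColumns_map {n n₁ n₂ S : Type*} (f : R → S)
    (A : Matrix n n₁ R) (B : Matrix n n₂ R) :
    Matrix.fromCols (A.map f) (B.map f) = (Matrix.fromCols A B).map f := by
  ext i j
  cases j <;> rfl

lemma my_fromColumns_smul {n n₁ n₂ : Type*} [Fintype n₁] [Fintype n₂]
    [DecidableEq n₁] [DecidableEq n₂] (x y : R)
    (A : Matrix n n₁ R) (B : Matrix n n₂ R) :
    Matrix.fromCols (x • A) (y • B) =
      Matrix.fromCols A B *
        Matrix.diagonal (Sum.elim (Function.const n₁ x) (Function.const n₂ y)) := by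
  ext i j
  cases j <;> simp [Matrix.mul_diagonal, Matrix.fromCols, mul_comm]

end aux2

lemma my_key {n' d' m' : ℕ} (A : Matrix (Fin n') (Fin d') ℝ) (B : Matrix (Fin n') (Fin m') ℝ)
    (S : Finset (Fin d')) (R : Finset (Fin m')) :
    Matrix.det
      ((((Matrix.fromCols
            ((MvPolynomial.X 0 : MvPolynomial (Fin 2) ℝ) • A.map (MvPolynomial.C : ℝ → MvPolynomial (Fin 2) ℝ))
            ((MvPolynomial.X 1 : MvPolynomial (Fin 2) ℝ) • B.map (MvPolynomial.C : ℝ → MvPolynomial (Fin 2) ℝ)))ᵀ *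
          Matrix.fromCols
            ((MvPolynomial.X 0 : MvPolynomial (Fin 2) ℝ) • A.map (MvPolynomial.C : ℝ → MvPolynomial (Fin 2) ℝ))
            ((MvPolynomial.X 1 : MvPolynomial (Fin 2) ℝ) • B.map (MvPolynomial.C : ℝ → MvPolynomial (Fin 2) ℝ))).submatrix
        (Subtype.val : {t // t ∈ S.disjSum R} → Fin d' ⊕ Fin m') Subtype.val)) =
    MvPolynomial.monomial (Finsupp.single 0 (2 * S.card) + Finsupp.single 1 (2 * R.card))
      (Matrix.det
        ((Matrix.fromCols (A.submatrix id (Subtype.val : {i // i ∈ S} → Fin d'))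
            (B.submatrix id (Subtype.val : {j // j ∈ R} → Fin m')))ᵀ *
          Matrix.fromCols (A.submatrix id (Subtype.val : {i // i ∈ S} → Fin d'))
            (B.submatrix id (Subtype.val : {j // j ∈ R} → Fin m')))) := by
  classical
  set x : MvPolynomial (Fin 2) ℝ := MvPolynomial.X 0 with hx
  set y : MvPolynomial (Fin 2) ℝ := MvPolynomial.X 1 with hy
  rw [← Matrix.det_submatrix_equiv_self (myDisjSumEquiv S R), Matrix.submatrix_submatrix]
  have hcomp : (Subtype.val ∘ (myDisjSumEquiv S R)) =
      Sum.map (Subtype.val : {i // i ∈ S} → Fin d') (Subtype.val : {j // j ∈ R} → Fin m') := rfl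
  rw [hcomp, my_gram_submatrix, my_submatrix_fromColumns]
  simp only [Matrix.submatrix_smul, Pi.smul_apply, Matrix.submatrix_map]
  rw [my_fromColumns_smul, my_fromColumns_map]
  set G : Matrix (Fin n') ({i // i ∈ S} ⊕ {j // j ∈ R}) ℝ :=
    Matrix.fromCols (A.submatrix id (Subtype.val : {i // i ∈ S} → Fin d'))
      (B.submatrix id (Subtype.val : {j // j ∈ R} → Fin m')) with hG
  set Δ : Matrix ({i // i ∈ S} ⊕ {j // j ∈ R}) ({i // i ∈ S} ⊕ {j // j ∈ R}) (MvPolynomial (Fin 2) ℝ) :=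
    Matrix.diagonal (Sum.elim (Function.const _ x) (Function.const _ y)) with hΔ
  have h1 : (G.map (MvPolynomial.C : ℝ → MvPolynomial (Fin 2) ℝ) * Δ)ᵀ * (G.map (MvPolynomial.C : ℝ → MvPolynomial (Fin 2) ℝ) * Δ) =
      Δ * ((G.map (MvPolynomial.C : ℝ → MvPolynomial (Fin 2) ℝ))ᵀ * G.map (MvPolynomial.C : ℝ → MvPolynomial (Fin 2) ℝ)) * Δ := by
    rw [Matrix.transpose_mul, hΔ, Matrix.diagonal_transpose, Matrix.mul_assoc,
      ← Matrix.mul_assoc (G.map (MvPolynomial.C : ℝ → MvPolynomial (Fin 2) ℝ))ᵀ, ← Matrix.mul_assoc, ← Matrix.mul_assoc]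
  rw [h1]
  have h2 : (G.map (MvPolynomial.C : ℝ → MvPolynomial (Fin 2) ℝ))ᵀ * G.map (MvPolynomial.C : ℝ → MvPolynomial (Fin 2) ℝ) = (Gᵀ * G).map (MvPolynomial.C : ℝ → MvPolynomial (Fin 2) ℝ) := by
    rw [← Matrix.transpose_map, ← Matrix.map_mul (f := (MvPolynomial.C : ℝ →+* MvPolynomial (Fin 2) ℝ))]
  have hΔdet : Δ.det = x ^ S.card * y ^ R.card := by
    simp [hΔ, Fintype.prod_sum_type, Fintype.card_coe]
  rw [Matrix.det_mul, Matrix.det_mul, h2]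
  have h3 : ((Gᵀ * G).map (MvPolynomial.C : ℝ → MvPolynomial (Fin 2) ℝ)).det =
      MvPolynomial.C ((Gᵀ * G).det) :=
    (RingHom.map_det (MvPolynomial.C : ℝ →+* MvPolynomial (Fin 2) ℝ) (Gᵀ * G)).symm
  rw [h3, hΔdet]
  rw [hx, hy, MvPolynomial.X_pow_eq_monomial, MvPolynomial.X_pow_eq_monomial,
    MvPolynomial.C_apply, MvPolynomial.monomial_mul, MvPolynomial.monomial_mul,
    MvPolynomial.monomial_mul]
  congr 1
  · rw [add_zero, two_mul, two_mul, Finsupp.single_add, Finsupp.single_add]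
    abel_nf
  · ring


theorem stmt14 (n d m : ℕ) (A : Matrix (Fin n) (Fin d) ℝ) (B : Matrix (Fin n) (Fin m) ℝ)
    (k r : ℕ) (hk : k ≤ d) (hr : r ≤ m) :
    ∑ S ∈ Finset.powersetCard k (Finset.univ : Finset (Fin d)),
      ∑ R ∈ Finset.powersetCard r (Finset.univ : Finset (Fin m)),
        Matrix.det
          ((Matrix.fromCols (A.submatrix id (Subtype.val : {i // i ∈ S} → Fin d))
              (B.submatrix id (Subtype.val : {j // j ∈ R} → Fin m)))ᵀ *
            Matrix.fromCols (A.submatrix id (Subtype.val : {i // i ∈ S} → Fin d))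
              (B.submatrix id (Subtype.val : {j // j ∈ R} → Fin m))) =
      MvPolynomial.coeff (Finsupp.single 0 (2 * k) + Finsupp.single 1 (2 * r))
        (Matrix.det
          ((1 : Matrix (Fin d ⊕ Fin m) (Fin d ⊕ Fin m) (MvPolynomial (Fin 2) ℝ)) +
            (Matrix.fromCols
                ((MvPolynomial.X 0 : MvPolynomial (Fin 2) ℝ) • A.map (MvPolynomial.C : ℝ → MvPolynomial (Fin 2) ℝ))
                ((MvPolynomial.X 1 : MvPolynomial (Fin 2) ℝ) • B.map (MvPolynomial.C : ℝ → MvPolynomial (Fin 2) ℝ)))ᵀ *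
              Matrix.fromCols
                ((MvPolynomial.X 0 : MvPolynomial (Fin 2) ℝ) • A.map (MvPolynomial.C : ℝ → MvPolynomial (Fin 2) ℝ))
                ((MvPolynomial.X 1 : MvPolynomial (Fin 2) ℝ) • B.map (MvPolynomial.C : ℝ → MvPolynomial (Fin 2) ℝ)))) := by
  classical
  rw [my_det_one_add]
  rw [← Equiv.sum_comp (myFinsetSumEquiv (α := Fin d) (β := Fin m))]
  rw [Fintype.sum_prod_type]
  simp only [myFinsetSumEquiv, Equiv.coe_fn_mk]
  erw [Finset.sum_congr rfl fun x _ => Finset.sum_congr rfl fun y _ => my_key A B x y]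
  simp only [MvPolynomial.coeff_sum, MvPolynomial.coeff_monomial]
  have hcond : ∀ (S : Finset (Fin d)) (R : Finset (Fin m)),
      (Finsupp.single (0 : Fin 2) (2 * S.card) + Finsupp.single 1 (2 * R.card) =
        Finsupp.single (0 : Fin 2) (2 * k) + Finsupp.single 1 (2 * r)) ↔
        (S.card = k ∧ R.card = r) := by
    intro S R
    constructor
    · intro h
      have h0 := DFunLike.congr_fun h 0
      have h1 := DFunLike.congr_fun h 1
      simp only [Finsupp.add_apply, Finsupp.single_eq_same,
        Finsupp.single_eq_of_ne (show (1 : Fin 2) ≠ 0 by decide),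
        Finsupp.single_eq_of_ne (show (0 : Fin 2) ≠ 1 by decide)] at h0 h1
      omega
    · rintro ⟨h1, h2⟩
      rw [h1, h2]
  rw [Finset.powersetCard_eq_filter, Finset.powersetCard_eq_filter, Finset.powerset_univ,
    Finset.powerset_univ, Finset.sum_filter]
  refine Finset.sum_congr rfl fun S _ => ?_
  rw [Finset.sum_filter]
  by_cases hS : S.card = k
  · rw [if_pos hS]
    refine Finset.sum_congr rfl fun R _ => ?_
    by_cases hR : R.card = r
    · rw [if_pos hR, if_pos ((hcond S R).mpr ⟨hS, hR⟩)]
    · rw [if_neg hR, if_neg (fun h => hR ((hcond S R).mp h).2)]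
  · rw [if_neg hS]
    exact (Finset.sum_eq_zero fun R _ => if_neg (fun h => hS ((hcond S R).mp h).1)).symm
end

section
/- Let $p_1(x), \ldots, p_m(x)$ be real-rooted polynomials of the same degree $d$ with positive leading coefficients that have a common interlacing. Then there exists an index $j \in [m]$ such that the largest root of $p_j(x)$ is at most the largest root of $\sum_{i=1}^m p_i(x)$. -/
/-- The largest real root of a polynomial, as a supremum of its real root set. -/
noncomputable def maxRoot (p : Polynomial ℝ) : ℝ := sSup {x : ℝ | p.IsRoot x}

/-- `Interlaces d f p` means `f` is a real-rooted polynomial of degree `d - 1`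
interlacing the real-rooted degree-`d` polynomial `p`:
writing `f = a₀ ∏ (x - aᵢ)` and `p = b₀ ∏ (x - bᵢ)`, the roots satisfy
`b₁ ≤ a₁ ≤ b₂ ≤ a₂ ≤ ⋯ ≤ a_{d-1} ≤ b_d`. -/
def Interlaces (d : ℕ) (f p : Polynomial ℝ) : Prop :=
  ∃ (a0 b0 : ℝ) (a : Fin (d - 1) → ℝ) (b : Fin d → ℝ),
    a0 ≠ 0 ∧ b0 ≠ 0 ∧
    f = Polynomial.C a0 * ∏ i, (Polynomial.X - Polynomial.C (a i)) ∧
    p = Polynomial.C b0 * ∏ i, (Polynomial.X - Polynomial.C (b i)) ∧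
    ∀ i : Fin (d - 1),
      b ⟨i.val, by have := i.isLt; omega⟩ ≤ a i ∧
        a i ≤ b ⟨i.val + 1, by have := i.isLt; omega⟩

/-
Let `β = min_j maxRoot p_j`. Every root of the common interlacer `f` lies below the
largest root of each `p_i`, hence below `β`; so all roots of `p_i` except its largest are
`≤ β ≤ maxRoot p_i`, which forces `p_i(β) ≤ 0`. Thus `∑ p_i` is `≤ 0` at `β` and positive
beyond every root of every `p_i`, and the intermediate value theorem gives it a root `≥ β`.
-/

open Polynomial

section ProductForm

variable {n : ℕ} {c x : ℝ}

lemma isRoot_C_mul_prod_X_sub_C_iff {r : Fin n → ℝ} (hc : c ≠ 0) :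
    (C c * ∏ k, (X - C (r k))).IsRoot x ↔ x ∈ Set.range r := by
  simp only [IsRoot.def, eval_mul, eval_C, eval_prod, eval_sub, eval_X, mul_eq_zero, hc,
    false_or, Finset.prod_eq_zero_iff, Finset.mem_univ, true_and, sub_eq_zero, Set.mem_range,
    @eq_comm _ x]

lemma leadingCoeff_C_mul_prod_X_sub_C (r : Fin n → ℝ) :
    (C c * ∏ k, (X - C (r k))).leadingCoeff = c := by
  rw [leadingCoeff_mul, leadingCoeff_C,
    (monic_prod_of_monic _ _ fun k _ => monic_X_sub_C (r k)).leadingCoeff, mul_one]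

lemma C_mul_prod_X_sub_C_ne_zero {r : Fin n → ℝ} (hc : c ≠ 0) :
    C c * ∏ k, (X - C (r k)) ≠ 0 := by
  rw [← leadingCoeff_ne_zero, leadingCoeff_C_mul_prod_X_sub_C]
  exact hc

lemma eval_C_mul_prod_X_sub_C_pos {r : Fin n → ℝ} (hc : 0 < c) (hr : ∀ k, r k < x) :
    0 < (C c * ∏ k, (X - C (r k))).eval x := by
  simp only [eval_mul, eval_C, eval_prod, eval_sub, eval_X]
  exact mul_pos hc (Finset.prod_pos fun k _ => sub_pos.2 (hr k))

lemma eval_C_mul_prod_X_sub_C_nonpos {r : Fin (n + 1) → ℝ} (hc : 0 ≤ c)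
    (hinit : ∀ i : Fin n, r i.castSucc ≤ x) (hlast : x ≤ r (Fin.last n)) :
    (C c * ∏ k, (X - C (r k))).eval x ≤ 0 := by
  simp only [eval_mul, eval_C, eval_prod, eval_sub, eval_X, Fin.prod_univ_castSucc]
  exact mul_nonpos_of_nonneg_of_nonpos hc <| mul_nonpos_of_nonneg_of_nonpos
    (Finset.prod_nonneg fun i _ => sub_nonneg.2 (hinit i)) (sub_nonpos.2 hlast)

end ProductForm

lemma le_maxRoot {p : ℝ[X]} {x : ℝ} (hp : p ≠ 0) (hx : p.IsRoot x) : x ≤ maxRoot p :=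
  le_csSup (finite_setOfPred_isRoot hp).bddAbove hx

lemma maxRoot_C_mul_prod_X_sub_C {n : ℕ} {c : ℝ} {r : Fin (n + 1) → ℝ} (hc : c ≠ 0)
    (hr : Monotone r) : maxRoot (C c * ∏ k, (X - C (r k))) = r (Fin.last n) := by
  refine IsGreatest.csSup_eq ⟨(isRoot_C_mul_prod_X_sub_C_iff hc).2 ⟨_, rfl⟩, ?_⟩
  intro x hx
  obtain ⟨k, rfl⟩ := (isRoot_C_mul_prod_X_sub_C_iff hc).1 hx
  exact hr (Fin.le_last k)

lemma le_maxRoot_of_eval_nonpos_of_pos {p : ℝ[X]} {x z : ℝ} (hxz : x ≤ z)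
    (hx : p.eval x ≤ 0) (hz : 0 < p.eval z) : x ≤ maxRoot p := by
  obtain ⟨y, hy, hpy⟩ := intermediate_value_Icc hxz p.continuousOn ⟨hx, hz.le⟩
  have hp : p ≠ 0 := by rintro rfl; simp at hz
  exact hy.1.trans (le_maxRoot hp hpy)

namespace Interlaces

variable {d n : ℕ} {f p : ℝ[X]} {x : ℝ}

lemma isRoot_le_maxRoot (h : Interlaces d f p) {y : ℝ} (hy : f.IsRoot y) : y ≤ maxRoot p := by
  obtain ⟨a0, b0, a, b, ha0, hb0, rfl, rfl, hab⟩ := h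
  obtain ⟨i, rfl⟩ := (isRoot_C_mul_prod_X_sub_C_iff ha0).1 hy
  exact (hab i).2.trans <| le_maxRoot (C_mul_prod_X_sub_C_ne_zero hb0)
    ((isRoot_C_mul_prod_X_sub_C_iff hb0).2 ⟨_, rfl⟩)

lemma eval_pos (h : Interlaces d f p) (hp : 0 < p.leadingCoeff) (hx : maxRoot p < x) :
    0 < p.eval x := by
  obtain ⟨a0, b0, a, b, -, hb0, -, rfl, -⟩ := h
  rw [leadingCoeff_C_mul_prod_X_sub_C] at hp
  refine eval_C_mul_prod_X_sub_C_pos hp fun k => lt_of_le_of_lt ?_ hx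
  exact le_maxRoot (C_mul_prod_X_sub_C_ne_zero hb0)
    ((isRoot_C_mul_prod_X_sub_C_iff hb0).2 ⟨k, rfl⟩)

lemma eval_nonpos (h : Interlaces (n + 1) f p) (hp : 0 < p.leadingCoeff)
    (hf : ∀ y, f.IsRoot y → y ≤ x) (hx : x ≤ maxRoot p) : p.eval x ≤ 0 := by
  obtain ⟨a0, b0, a, b, ha0, hb0, rfl, rfl, hab⟩ := h
  rw [leadingCoeff_C_mul_prod_X_sub_C] at hp
  -- `Fin (n + 1 - 1)` is `Fin n` by defeq, and the indices in `hab i` are `i.castSucc`, `i.succ`.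
  have hb : Monotone b := Fin.monotone_iff_le_succ.2 fun i => (hab i).1.trans (hab i).2
  rw [maxRoot_C_mul_prod_X_sub_C hb0 hb] at hx
  refine eval_C_mul_prod_X_sub_C_nonpos hp.le (fun i => (hab i).1.trans ?_) hx
  exact hf _ ((isRoot_C_mul_prod_X_sub_C_iff ha0).2 ⟨i, rfl⟩)

end Interlaces

theorem stmt17_general (m d : ℕ) (hm : 0 < m) (hd : 0 < d) (p : Fin m → Polynomial ℝ)
    (hlead : ∀ i, 0 < (p i).leadingCoeff)
    (hcommon : ∃ f : Polynomial ℝ, ∀ i, Interlaces d f (p i)) :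
    ∃ j : Fin m, maxRoot (p j) ≤ maxRoot (∑ i, p i) := by
  obtain ⟨n, rfl⟩ := Nat.exists_eq_add_one_of_ne_zero hd.ne'
  obtain ⟨f, hf⟩ := hcommon
  have : Nonempty (Fin m) := ⟨⟨0, hm⟩⟩
  obtain ⟨j, hj⟩ := Finite.exists_min fun i => maxRoot (p i)
  obtain ⟨k, hk⟩ := Finite.exists_max fun i => maxRoot (p i)
  refine ⟨j, le_maxRoot_of_eval_nonpos_of_pos (z := maxRoot (p k) + 1) (by linarith [hj k]) ?_ ?_⟩
  · rw [eval_finsetSum]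
    exact Finset.sum_nonpos fun i _ =>
      (hf i).eval_nonpos (hlead i) (fun y hy => (hf j).isRoot_le_maxRoot hy) (hj i)
  · rw [eval_finsetSum]
    exact Finset.sum_pos (fun i _ => (hf i).eval_pos (hlead i) (by linarith [hk i]))
      Finset.univ_nonempty

theorem stmt17 (m d : ℕ) (hm : 0 < m) (hd : 0 < d) (p : Fin m → Polynomial ℝ)
    (hdeg : ∀ i, (p i).degree = d) (hlead : ∀ i, 0 < (p i).leadingCoeff)
    (hcommon : ∃ f : Polynomial ℝ, ∀ i, Interlaces d f (p i)) :
    ∃ j : Fin m, maxRoot (p j) ≤ maxRoot (∑ i, p i) :=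
  stmt17_general m d hm hd p hlead hcommon
end
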